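/- Let f : I ⊆ (0,∞) → (0,∞) be differentiable on I°, let a, b ∈ I° with a < b, f' integrable on [a,b], and suppose |f'|^q is s-geometrically convex on [a,b] for some q > 1 and s ∈ (0,1]. If |f'(a)| ≥ 1 and |f'(b)| ≥ 1, then |f(√(ab)) − (1/(ln b − ln a)) ∫_a^b f(x)/x dx| ≤ (1/4) ln(b/a) · ((q−1)/(2q−1))^{1−1/q} · [ a|f'(a)||f'(b)|^{1−s} g₂(θ₃)^{1/q} + b|f'(b)||f'(a)|^{1−s} g₂(θ₄)^{1/q} ]. -/

import Mathlib

open Real MeasureTheory Set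

/-- `g` is `s`-geometrically convex on `J`. -/
def SGeometricallyConvexOn (s : ℝ) (J : Set ℝ) (g : ℝ → ℝ) : Prop :=
  ∀ x ∈ J, ∀ y ∈ J, ∀ t ∈ Set.Icc (0:ℝ) 1,
    g (x ^ t * y ^ (1 - t)) ≤ g x ^ t ^ s * g y ^ (1 - t) ^ s

noncomputable def g₁ (u : ℝ) : ℝ :=
  if u = 1 then 1/2 else (u * Real.log u - u + 1) / (Real.log u) ^ 2

noncomputable def g₂ (u : ℝ) : ℝ :=
  if u = 1 then 1 else (u - 1) / Real.log u

/-!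
Write `x(t) = a ^ (1 - t) * b ^ t`. The substitution `x = x(t)` turns the left-hand side into
`F (1/2) - ∫₀¹ F` with `F = f ∘ x`. Integrating by parts against the kernel `t` on `[0, 1/2]` and
`t - 1` on `[1/2, 1]`, and reflecting `t ↦ 1 - t` on the second half (which swaps `a` and `b`),
expresses it as `log (b / a)` times a difference of two integrals of `t * x(t) * f' (x(t))` over
`[0, 1/2]`. Since `|f'| ≥ 1` at the endpoints, `s`-geometric convexity and Bernoulli's bound
`t ^ s ≤ s t + 1 - s` dominate `x(t) * |f' (x(t))|` by a multiple of an exponential `exp (r t)`,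
and Hölder's inequality with exponents `q / (q - 1)` and `q` bounds `∫₀^{1/2} t exp (r t)` by
`1/4 * ((q - 1) / (2q - 1)) ^ (1 - 1/q) * g₂ (exp (q r / 2)) ^ (1 / q)`.
-/

noncomputable def geomPath (a b t : ℝ) : ℝ := a * exp ((log b - log a) * t)

section GeomPath

variable {a b : ℝ}

lemma geomPath_pos (ha : 0 < a) (t : ℝ) : 0 < geomPath a b t := by
  unfold geomPath; positivity

lemma geomPath_zero : geomPath a b 0 = a := by simp [geomPath]

lemma geomPath_eq_rpow (ha : 0 < a) (hb : 0 < b) (t : ℝ) :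
    geomPath a b t = a ^ (1 - t) * b ^ t := by
  rw [rpow_def_of_pos ha, rpow_def_of_pos hb, ← exp_add, geomPath]
  conv_lhs => rw [← exp_log ha, ← exp_add, log_exp]
  ring_nf

lemma geomPath_one (ha : 0 < a) (hb : 0 < b) : geomPath a b 1 = b := by
  rw [geomPath_eq_rpow ha hb]; simp

lemma geomPath_half (ha : 0 < a) (hb : 0 < b) : geomPath a b (1 / 2) = √(a * b) := by
  rw [geomPath_eq_rpow ha hb, sqrt_eq_rpow, mul_rpow ha.le hb.le]
  norm_num

lemma geomPath_one_sub (ha : 0 < a) (hb : 0 < b) (t : ℝ) :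
    geomPath a b (1 - t) = geomPath b a t := by
  rw [geomPath_eq_rpow ha hb, geomPath_eq_rpow hb ha, sub_sub_cancel, mul_comm]

lemma hasDerivAt_geomPath (t : ℝ) :
    HasDerivAt (geomPath a b) ((log b - log a) * geomPath a b t) t := by
  have h : HasDerivAt (geomPath a b) (a * (exp ((log b - log a) * t) * ((log b - log a) * 1))) t :=
    ((hasDerivAt_id t).const_mul (log b - log a)).exp.const_mul a
  convert h using 1
  rw [geomPath]
  ring

lemma continuous_geomPath : Continuous (geomPath a b) := by
  unfold geomPath; fun_prop

lemma monotone_geomPath (ha : 0 < a) (hab : a ≤ b) : Monotone (geomPath a b) := by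
  intro u v huv
  have : 0 ≤ log b - log a := sub_nonneg.mpr (log_le_log ha hab)
  unfold geomPath
  gcongr

lemma mapsTo_geomPath (ha : 0 < a) (hab : a ≤ b) :
    MapsTo (geomPath a b) (Icc 0 1) (Icc a b) := by
  intro u hu
  have h₀ := monotone_geomPath ha hab hu.1
  have h₁ := monotone_geomPath ha hab hu.2
  rw [geomPath_zero] at h₀
  rw [geomPath_one ha (ha.trans_le hab)] at h₁
  exact ⟨h₀, h₁⟩

end GeomPath

lemma rpow_le_mul_add_one_sub {t s : ℝ} (ht : 0 ≤ t) (hs : s ∈ Icc (0:ℝ) 1) :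
    t ^ s ≤ s * t + 1 - s := by
  have h := rpow_one_add_le_one_add_mul_self (s := t - 1) (by linarith) hs.1 hs.2
  rw [add_sub_cancel] at h
  linarith

lemma SGeometricallyConvexOn.le_rpow_mul_rpow {s : ℝ} {J : Set ℝ} {g : ℝ → ℝ}
    (hg : SGeometricallyConvexOn s J g) (hs : s ∈ Icc (0:ℝ) 1) {x y : ℝ} (hx : x ∈ J)
    (hy : y ∈ J) (hgx : 1 ≤ g x) (hgy : 1 ≤ g y) {t : ℝ} (ht : t ∈ Icc (0:ℝ) 1) :
    g (x ^ t * y ^ (1 - t)) ≤ g x ^ (s * t + 1 - s) * g y ^ (s * (1 - t) + 1 - s) := by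
  refine (hg x hx y hy t ht).trans (mul_le_mul ?_ ?_ (by positivity) (by positivity))
  · exact rpow_le_rpow_of_exponent_le hgx (rpow_le_mul_add_one_sub ht.1 hs)
  · exact rpow_le_rpow_of_exponent_le hgy (rpow_le_mul_add_one_sub (by linarith [ht.2]) hs)

lemma abs_apply_geomPath_le {f' : ℝ → ℝ} {a b q s : ℝ} (ha : 0 < a) (hab : a ≤ b)
    (hq : 0 < q) (hs : s ∈ Icc (0:ℝ) 1)
    (hconv : SGeometricallyConvexOn s (Icc a b) (fun x => |f' x| ^ q))
    (hfa : 1 ≤ |f' a|) (hfb : 1 ≤ |f' b|) {u : ℝ} (hu : u ∈ Icc (0:ℝ) 1) :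
    |f' (geomPath a b u)| ≤ |f' a| ^ (s * (1 - u) + 1 - s) * |f' b| ^ (s * u + 1 - s) := by
  have h := hconv.le_rpow_mul_rpow hs (left_mem_Icc.mpr hab) (right_mem_Icc.mpr hab)
    (one_le_rpow hfa hq.le) (one_le_rpow hfb hq.le) (t := 1 - u)
    ⟨by linarith [hu.2], by linarith [hu.1]⟩
  rw [sub_sub_cancel, ← geomPath_eq_rpow ha (ha.trans_le hab), ← rpow_mul (abs_nonneg _),
    ← rpow_mul (abs_nonneg _), mul_comm q, mul_comm q, rpow_mul (abs_nonneg _),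
    rpow_mul (abs_nonneg _), ← mul_rpow (by positivity) (by positivity)] at h
  exact (rpow_le_rpow_iff (abs_nonneg _) (by positivity) hq).mp h

lemma g₂_nonneg {u : ℝ} (hu : 0 < u) : 0 ≤ g₂ u := by
  unfold g₂
  split_ifs with h
  · exact zero_le_one
  · rcases lt_or_gt_of_ne h with h₁ | h₁
    · exact div_nonneg_of_nonpos (by linarith) (log_neg hu h₁).le
    · exact div_nonneg (by linarith) (log_pos h₁).le

lemma integral_exp_mul (r x : ℝ) : ∫ u in (0:ℝ)..x, exp (r * u) = x * g₂ (exp (r * x)) := by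
  unfold g₂
  rcases eq_or_ne (r * x) 0 with hrx | hrx
  · rcases mul_eq_zero.mp hrx with rfl | rfl <;> simp
  · have hr : r ≠ 0 := left_ne_zero_of_mul hrx
    have hx : x ≠ 0 := right_ne_zero_of_mul hrx
    rw [if_neg (fun h => hrx (exp_eq_one_iff _ |>.mp h)), log_exp,
      intervalIntegral.integral_comp_mul_left exp hr, integral_exp, mul_zero, exp_zero, smul_eq_mul]
    field_simp

lemma integral_mul_le_rpow_mul_rpow {p q : ℝ} (hpq : p.HolderConjugate q) {F G : ℝ → ℝ}
    (hF : Continuous F) (hG : Continuous G) {c d : ℝ} (hcd : c ≤ d)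
    (hF0 : ∀ x ∈ Icc c d, 0 ≤ F x) (hG0 : ∀ x ∈ Icc c d, 0 ≤ G x) :
    ∫ u in c..d, F u * G u ≤
      (∫ u in c..d, F u ^ p) ^ (1 / p) * (∫ u in c..d, G u ^ q) ^ (1 / q) := by
  simp only [intervalIntegral.integral_of_le hcd]
  have hmem : ∀ H : ℝ → ℝ, Continuous H → ∀ r : ℝ,
      MemLp H (ENNReal.ofReal r) (volume.restrict (Ioc c d)) := fun H hH r => by
    obtain ⟨C, hC⟩ :=
      (isCompact_Icc (a := c) (b := d)).exists_bound_of_continuousOn hH.continuousOn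
    exact MemLp.of_bound hH.aestronglyMeasurable C
      (ae_restrict_of_forall_mem measurableSet_Ioc fun x hx => hC x (Ioc_subset_Icc_self hx))
  have hnonneg : ∀ H : ℝ → ℝ, (∀ x ∈ Icc c d, 0 ≤ H x) →
      0 ≤ᵐ[volume.restrict (Ioc c d)] H :=
    fun H hH =>
      ae_restrict_of_forall_mem measurableSet_Ioc fun x hx => hH x (Ioc_subset_Icc_self hx)
  exact integral_mul_le_Lp_mul_Lq_of_nonneg hpq (hnonneg F hF0) (hnonneg G hG0)
    (hmem F hF p) (hmem G hG q)

lemma integral_mul_exp_le {q : ℝ} (hq : 1 < q) (r : ℝ) :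
    ∫ u in (0:ℝ)..(1/2), u * exp (r * u) ≤
      1 / 4 * ((q - 1) / (2 * q - 1)) ^ (1 - 1 / q) * g₂ (exp (q * r / 2)) ^ (1 / q) := by
  set p := q / (q - 1) with hp
  have hpq : p.HolderConjugate q := (Real.HolderConjugate.conjExponent hq).symm
  have hholder := integral_mul_le_rpow_mul_rpow hpq (F := fun u => u)
    (G := fun u => exp (r * u)) continuous_id (by fun_prop)
    (by norm_num : (0:ℝ) ≤ 1 / 2) (fun _ hx => hx.1) (fun _ _ => (exp_pos _).le)
  have hpow : ∫ u in (0:ℝ)..(1/2), u ^ p = (1 / 2) ^ (p + 1) / (p + 1) := by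
    rw [integral_rpow (Or.inl (by linarith [hpq.lt])), zero_rpow (by linarith [hpq.lt])]
    ring
  have hexp : ∫ u in (0:ℝ)..(1/2), exp (r * u) ^ q = 1 / 2 * g₂ (exp (q * r / 2)) := by
    simp_rw [← exp_mul, show ∀ u, r * u * q = q * r * u from fun u => by ring]
    rw [integral_exp_mul]
    ring_nf
  have hG : 0 ≤ g₂ (exp (q * r / 2)) := g₂_nonneg (exp_pos _)
  have hq₁ : q - 1 ≠ 0 := by linarith
  have hp₁ : 1 / (p + 1) = (q - 1) / (2 * q - 1) := by
    rw [hp]; field_simp; ring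
  have hp₂ : 1 / p = 1 - 1 / q := by
    rw [hp]; field_simp
  have hp₃ : (p + 1) * (1 / p) + 1 / q = 2 := by
    rw [hp]; field_simp; ring
  refine hholder.trans (le_of_eq ?_)
  rw [hpow, hexp, div_eq_mul_one_div _ (p + 1), mul_rpow (by positivity) (by positivity),
    mul_rpow (by norm_num) hG, ← rpow_mul (by norm_num), hp₁, hp₂]
  calc (1 / 2 : ℝ) ^ ((p + 1) * (1 - 1 / q)) * ((q - 1) / (2 * q - 1)) ^ (1 - 1 / q) *
        ((1 / 2) ^ (1 / q) * g₂ (exp (q * r / 2)) ^ (1 / q))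
      = (1 / 2 : ℝ) ^ ((p + 1) * (1 / p) + 1 / q) * ((q - 1) / (2 * q - 1)) ^ (1 - 1 / q) *
        g₂ (exp (q * r / 2)) ^ (1 / q) := by
        rw [hp₂, rpow_add (by norm_num)]; ring
    _ = _ := by rw [hp₃]; norm_num

lemma abs_integral_mul_geomPath_le {c d α β q s : ℝ} (hc : 0 < c) (hd : 0 < d) (hα : 0 < α)
    (hβ : 0 < β) (hq : 1 < q) {g : ℝ → ℝ}
    (hg : ∀ u ∈ Icc (0:ℝ) (1/2),
      |g (geomPath c d u)| ≤ α ^ (s * (1 - u) + 1 - s) * β ^ (s * u + 1 - s)) :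
    |∫ u in (0:ℝ)..(1/2), u * geomPath c d u * g (geomPath c d u)| ≤
      1 / 4 * ((q - 1) / (2 * q - 1)) ^ (1 - 1 / q) *
        (c * α * β ^ (1 - s) * g₂ ((d * β ^ s / (c * α ^ s)) ^ (q / 2)) ^ (1 / q)) := by
  set θ := d * β ^ s / (c * α ^ s)
  have hθ : 0 < θ := by positivity
  have hmajorant : ∀ u, u * geomPath c d u * (α ^ (s * (1 - u) + 1 - s) * β ^ (s * u + 1 - s)) =
      c * α * β ^ (1 - s) * (u * exp (log θ * u)) := by
    intro u
    rw [log_div (by positivity) (by positivity), log_mul hd.ne' (by positivity),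
      log_mul hc.ne' (by positivity), log_rpow hβ, log_rpow hα, geomPath,
      rpow_def_of_pos hα, rpow_def_of_pos hβ, rpow_def_of_pos hβ]
    conv_rhs => rw [← exp_log hα]
    simp only [log_exp, mul_assoc, ← exp_add]
    ring_nf
    rw [mul_assoc (u * c), ← exp_add]
    ring_nf
  calc |∫ u in (0:ℝ)..(1/2), u * geomPath c d u * g (geomPath c d u)|
      ≤ ∫ u in (0:ℝ)..(1/2), c * α * β ^ (1 - s) * (u * exp (log θ * u)) := by
        rw [← Real.norm_eq_abs]
        refine intervalIntegral.norm_integral_le_of_norm_le (by norm_num)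
          (ae_of_all _ fun u hu => ?_) (by apply Continuous.intervalIntegrable; fun_prop)
        have hweight : 0 ≤ u * geomPath c d u := mul_nonneg hu.1.le (geomPath_pos hc u).le
        rw [Real.norm_eq_abs, ← hmajorant, abs_mul, abs_of_nonneg hweight]
        exact mul_le_mul_of_nonneg_left (hg u ⟨hu.1.le, hu.2⟩) hweight
    _ = c * α * β ^ (1 - s) * ∫ u in (0:ℝ)..(1/2), u * exp (log θ * u) :=
        intervalIntegral.integral_const_mul _ _
    _ ≤ c * α * β ^ (1 - s) *
          (1 / 4 * ((q - 1) / (2 * q - 1)) ^ (1 - 1 / q) *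
            g₂ (exp (q * log θ / 2)) ^ (1 / q)) := by
        gcongr
        exact integral_mul_exp_le hq _
    _ = _ := by
        rw [rpow_def_of_pos hθ, show log θ * (q / 2) = q * log θ / 2 by ring]
        ring

lemma sub_integral_eq_integral_mul_deriv {F F' : ℝ → ℝ} {x : ℝ} (hx : x ∈ Icc (0:ℝ) 1)
    (hF : ∀ u ∈ Icc (0:ℝ) 1, HasDerivAt F (F' u) u) (hF' : IntervalIntegrable F' volume 0 1) :
    F x - ∫ u in (0:ℝ)..1, F u =
      (∫ u in (0:ℝ)..x, u * F' u) + ∫ u in x..1, (u - 1) * F' u := by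
  have hF_int : IntervalIntegrable F volume 0 1 :=
    ContinuousOn.intervalIntegrable fun u hu =>
      (hF u (by rwa [uIcc_of_le zero_le_one] at hu)).continuousAt.continuousWithinAt
  have hleft : uIcc 0 x ⊆ uIcc (0:ℝ) 1 := by
    rw [uIcc_of_le hx.1, uIcc_of_le zero_le_one]; exact Icc_subset_Icc_right hx.2
  have hright : uIcc x 1 ⊆ uIcc (0:ℝ) 1 := by
    rw [uIcc_of_le hx.2, uIcc_of_le zero_le_one]; exact Icc_subset_Icc_left hx.1
  have hF_mem : ∀ u ∈ uIcc (0:ℝ) 1, HasDerivAt F (F' u) u := fun u hu =>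
    hF u (by rwa [uIcc_of_le zero_le_one] at hu)
  rw [intervalIntegral.integral_mul_deriv_eq_deriv_mul (fun u _ => hasDerivAt_id' u)
      (fun u hu => hF_mem u (hleft hu)) intervalIntegrable_const (hF'.mono_set hleft),
    intervalIntegral.integral_mul_deriv_eq_deriv_mul (fun u _ => (hasDerivAt_id' u).sub_const 1)
      (fun u hu => hF_mem u (hright hu)) intervalIntegrable_const (hF'.mono_set hright),
    ← intervalIntegral.integral_add_adjacent_intervals (hF_int.mono_set hleft)
      (hF_int.mono_set hright)]
  simp only [one_mul]
  ring

lemma integral_div_eq_integral_comp_geomPath {f : ℝ → ℝ} {a b : ℝ} (ha : 0 < a)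
    (hab : a ≤ b) (hf : ContinuousOn f (Icc a b)) :
    ∫ x in a..b, f x / x = (log b - log a) * ∫ t in (0:ℝ)..1, f (geomPath a b t) := by
  have h := intervalIntegral.integral_comp_mul_deriv' (a := 0) (b := 1) (g := fun x => f x / x)
    (fun t _ => hasDerivAt_geomPath t)
    (continuous_const.mul (continuous_geomPath (a := a) (b := b))).continuousOn
    ((hf.div continuousOn_id fun x hx => (ha.trans_le hx.1).ne').mono
      (by rw [uIcc_of_le zero_le_one]; exact (mapsTo_geomPath ha hab).image_subset))
  rw [geomPath_zero, geomPath_one ha (ha.trans_le hab)] at h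
  rw [← h, ← intervalIntegral.integral_const_mul]
  refine intervalIntegral.integral_congr fun t _ => ?_
  have := (geomPath_pos (b := b) ha t).ne'
  simp only [Function.comp_apply]
  field_simp

lemma intervalIntegrable_deriv_mul_comp_geomPath {g : ℝ → ℝ} {a b : ℝ} (ha : 0 < a)
    (hab : a ≤ b) (hg : IntervalIntegrable g volume a b) :
    IntervalIntegrable (fun t => (log b - log a) * geomPath a b t * g (geomPath a b t))
      volume 0 1 := by
  have hL : 0 ≤ log b - log a := sub_nonneg.mpr (log_le_log ha hab)
  rw [intervalIntegrable_iff_integrableOn_Icc_of_le zero_le_one]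
  refine (integrableOn_Icc_deriv_smul_iff_of_deriv_nonneg continuous_geomPath.continuousOn
    (fun t _ => hasDerivAt_geomPath t) (fun t _ => mul_nonneg hL (geomPath_pos ha t).le)
    zero_le_one).mpr ?_
  rwa [geomPath_zero, geomPath_one ha (ha.trans_le hab),
    ← intervalIntegrable_iff_integrableOn_Icc_of_le hab]

lemma integral_sub_one_mul_geomPath {a b : ℝ} (ha : 0 < a) (hb : 0 < b) (g : ℝ → ℝ) :
    ∫ u in (1/2:ℝ)..1, (u - 1) * geomPath a b u * g (geomPath a b u) =
      -∫ u in (0:ℝ)..(1/2), u * geomPath b a u * g (geomPath b a u) := by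
  have h := intervalIntegral.integral_comp_sub_left (a := 0) (b := 1 / 2)
    (fun u : ℝ => (u - 1) * geomPath a b u * g (geomPath a b u)) 1
  rw [show (1:ℝ) - 1 / 2 = 1 / 2 by norm_num, sub_zero] at h
  rw [← h, ← intervalIntegral.integral_neg]
  refine intervalIntegral.integral_congr fun u _ => ?_
  simp only [geomPath_one_sub ha hb]
  ring

theorem apply_sqrt_mul_sub_integral_div_eq {f f' : ℝ → ℝ} {a b : ℝ} (ha : 0 < a)
    (hab : a < b) (hf : ∀ x ∈ Icc a b, HasDerivAt f (f' x) x)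
    (hf' : IntervalIntegrable f' volume a b) :
    f √(a * b) - 1 / (log b - log a) * ∫ x in a..b, f x / x =
      (log b - log a) * ((∫ u in (0:ℝ)..(1/2), u * geomPath a b u * f' (geomPath a b u)) -
        ∫ u in (0:ℝ)..(1/2), u * geomPath b a u * f' (geomPath b a u)) := by
  have hb : 0 < b := ha.trans hab
  have hL : log b - log a ≠ 0 := (sub_pos.mpr (log_lt_log ha hab)).ne'
  have hderiv : ∀ u ∈ Icc (0:ℝ) 1, HasDerivAt (fun u => f (geomPath a b u))
      ((log b - log a) * geomPath a b u * f' (geomPath a b u)) u := fun u hu =>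
    ((hf _ (mapsTo_geomPath ha hab.le hu)).comp u (hasDerivAt_geomPath u)).congr_deriv (by ring)
  have hpull : ∀ (k : ℝ → ℝ) (c d : ℝ),
      ∫ u in c..d, k u * ((log b - log a) * geomPath a b u * f' (geomPath a b u)) =
        (log b - log a) * ∫ u in c..d, k u * geomPath a b u * f' (geomPath a b u) :=
    fun k c d => by
      rw [← intervalIntegral.integral_const_mul]
      congr 1; ext u; ring
  rw [← geomPath_half ha hb,
    integral_div_eq_integral_comp_geomPath ha hab.le
      fun x hx => (hf x hx).continuousAt.continuousWithinAt,
    ← mul_assoc, one_div_mul_cancel hL, one_mul,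
    sub_integral_eq_integral_mul_deriv ⟨by norm_num, by norm_num⟩ hderiv
      (intervalIntegrable_deriv_mul_comp_geomPath ha hab.le hf'),
    hpull (fun u => u), hpull (fun u => u - 1), integral_sub_one_mul_geomPath ha hb]
  ring

theorem stmt_15_general
    (I : Set ℝ) (hI : I.OrdConnected) (hIpos : I ⊆ Set.Ioi (0:ℝ))
    (f f' : ℝ → ℝ)
    (a b : ℝ) (ha : a ∈ interior I) (hb : b ∈ interior I) (hab : a < b)
    (hdiff : ∀ x ∈ interior I, HasDerivAt f (f' x) x)
    (hint : IntervalIntegrable f' volume a b)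
    (q s : ℝ) (hq : 1 < q) (hs : s ∈ Set.Ioc (0:ℝ) 1)
    (hconv : SGeometricallyConvexOn s (Set.Icc a b) (fun x => |f' x| ^ q))
    (hfa : 1 ≤ |f' a|) (hfb : 1 ≤ |f' b|) :
    |f (Real.sqrt (a * b)) - (1 / (Real.log b - Real.log a)) * ∫ x in a..b, f x / x| ≤
      (1 / 4 : ℝ) * Real.log (b / a) * ((q - 1) / (2 * q - 1)) ^ (1 - 1 / q) *
        (a * |f' a| * |f' b| ^ (1 - s) * (g₂ ((b * |f' b| ^ s / (a * |f' a| ^ s)) ^ (q / 2))) ^ (1 / q)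
         + b * |f' b| * |f' a| ^ (1 - s) * (g₂ ((a * |f' a| ^ s / (b * |f' b| ^ s)) ^ (q / 2))) ^ (1 / q)) := by
  have ha₀ : 0 < a := hIpos (interior_subset ha)
  have hb₀ : 0 < b := ha₀.trans hab
  have hbound : ∀ u ∈ Icc (0:ℝ) 1, |f' (geomPath a b u)| ≤
      |f' a| ^ (s * (1 - u) + 1 - s) * |f' b| ^ (s * u + 1 - s) :=
    fun u hu => abs_apply_geomPath_le ha₀ hab.le (by linarith) (Ioc_subset_Icc_self hs)
      hconv hfa hfb hu
  have hhalf : Icc (0:ℝ) (1 / 2) ⊆ Icc 0 1 := Icc_subset_Icc_right (by norm_num)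
  have h₁ := abs_integral_mul_geomPath_le ha₀ hb₀ (by linarith) (by linarith) hq
    fun u hu => hbound u (hhalf hu)
  have h₂ := abs_integral_mul_geomPath_le hb₀ ha₀ (α := |f' b|) (β := |f' a|) (by linarith)
    (by linarith) hq (g := f') fun u hu => by
      have h := hbound (1 - u) ⟨by linarith [hu.2], by linarith [hu.1]⟩
      rwa [sub_sub_cancel, geomPath_one_sub ha₀ hb₀, mul_comm (|f' a| ^ _)] at h
  have hL : 0 < log (b / a) := log_pos ((one_lt_div ha₀).mpr hab)
  rw [apply_sqrt_mul_sub_integral_div_eq ha₀ hab (fun x hx => hdiff x (hI.interior.out ha hb hx))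
    hint, abs_mul, ← log_div hb₀.ne' ha₀.ne', abs_of_pos hL]
  exact (mul_le_mul_of_nonneg_left ((abs_sub _ _).trans (add_le_add h₁ h₂)) hL.le).trans_eq
    (by ring)

theorem stmt_15
    (I : Set ℝ) (hI : I.OrdConnected) (hIpos : I ⊆ Set.Ioi (0:ℝ))
    (f f' : ℝ → ℝ) (hfpos : ∀ x ∈ I, 0 < f x)
    (a b : ℝ) (ha : a ∈ interior I) (hb : b ∈ interior I) (hab : a < b)
    (hdiff : ∀ x ∈ interior I, HasDerivAt f (f' x) x)
    (hint : IntervalIntegrable f' volume a b)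
    (q s : ℝ) (hq : 1 < q) (hs : s ∈ Set.Ioc (0:ℝ) 1)
    (hconv : SGeometricallyConvexOn s (Set.Icc a b) (fun x => |f' x| ^ q))
    (hfa : 1 ≤ |f' a|) (hfb : 1 ≤ |f' b|) :
    |f (Real.sqrt (a * b)) - (1 / (Real.log b - Real.log a)) * ∫ x in a..b, f x / x| ≤
      (1 / 4 : ℝ) * Real.log (b / a) * ((q - 1) / (2 * q - 1)) ^ (1 - 1 / q) *
        (a * |f' a| * |f' b| ^ (1 - s) * (g₂ ((b * |f' b| ^ s / (a * |f' a| ^ s)) ^ (q / 2))) ^ (1 / q)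
         + b * |f' b| * |f' a| ^ (1 - s) * (g₂ ((a * |f' a| ^ s / (b * |f' b| ^ s)) ^ (q / 2))) ^ (1 / q)) :=
  stmt_15_general I hI hIpos f f' a b ha hb hab hdiff hint q s hq hs hconv hfa hfb
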